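/- Let D be the improved digraph whose associated undirected graph F is a forest, let T be a negative tree of D, and let u,v ∈ V(T). If P is a directed path from u to v in D' = D − A(T) with total weight c(P) < −d^T(v,u), then c is not nearly conservative on D. -/

import Mathlib

namespace NearlyConservativePaper

variable {V : Type} [Fintype V] [DecidableEq V]

/-- A weighted digraph given by adjacency and arc weights. -/
structure WDigraph (V : Type) where
  Adj : V → V → Prop
  c : V → V → ℝ

/-- A step `(u, v, b)` of a walk: `b = false` means an original arc from `u` to `v`,
`b = true` means the added loose arc from `u` to `v`. -/
abbrev Step (V : Type) := V × V × Bool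

/-- `IsWalk AS s t l`: `l` is a walk from `s` to `t` using arcs allowed by `AS`. -/
def IsWalk (AS : V → V → Bool → Prop) : V → V → List (Step V) → Prop
  | s, t, [] => s = t
  | s, t, (u, v, b) :: l => u = s ∧ AS u v b ∧ IsWalk AS v t l

/-- The list of head-vertices of the steps of a walk. -/
def heads (l : List (Step V)) : List V := l.map fun a => a.2.1

/-- Total weight of a walk with respect to the step-weight `w`. -/
def wSum (w : V → V → Bool → ℝ) (l : List (Step V)) : ℝ :=
  (l.map fun a => w a.1 a.2.1 a.2.2).sum

/-- A directed cycle: a nonempty closed walk whose vertices are pairwise distinct. -/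
def IsCycle (AS : V → V → Bool → Prop) (s : V) (l : List (Step V)) : Prop :=
  IsWalk AS s s l ∧ l ≠ [] ∧ (heads l).Nodup

/-- A directed (simple) path. -/
def IsPath (AS : V → V → Bool → Prop) (s t : V) (l : List (Step V)) : Prop :=
  IsWalk AS s t l ∧ (s :: heads l).Nodup

/-- Nearly conservative: every negative directed cycle consists of exactly two arcs. -/
def NearlyCons (AS : V → V → Bool → Prop) (w : V → V → Bool → ℝ) : Prop :=
  ∀ s l, IsCycle AS s l → wSum w l < 0 → l.length = 2

/-- Minimum weight of a directed path from `s` to `t`, `+∞` if there is none. -/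
noncomputable def distW (AS : V → V → Bool → Prop) (w : V → V → Bool → ℝ)
    (s t : V) : EReal :=
  sInf {x : EReal | ∃ l, IsPath AS s t l ∧ (wSum w l : EReal) = x}

namespace WDigraph

variable (D : WDigraph V)

/-- The arc `uv` is special if `vu` is also an arc and `c(uv) + c(vu) < 0`. -/
def Special (u v : V) : Prop := D.Adj u v ∧ D.Adj v u ∧ D.c u v + D.c v u < 0

/-- The arcs of the original digraph `D` (only `b = false` steps). -/
def baseArcs (u v : V) (b : Bool) : Prop := b = false ∧ D.Adj u v

/-- The arcs of the improved digraph: original arcs and, for every special arc `vu`,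
an added loose ordinary arc from `u` to `v`. -/
def ImpArc (u v : V) (b : Bool) : Prop := if b then D.Special v u else D.Adj u v

/-- The weight of a step of the improved digraph: the loose arc added for the
special arc `vu` has weight `-c(vu)`. -/
def impW (u v : V) (b : Bool) : ℝ := if b then -(D.c v u) else D.c u v

/-- A walk is special-simple if it contains every special arc at most once and never
contains both a special arc and its opposite. -/
def SpecialSimple (l : List (Step V)) : Prop :=
  ∀ u v, D.Special u v → l.count (u, v, false) + l.count (v, u, false) ≤ 1

/-- The associated undirected graph `F`. -/
def F : SimpleGraph V where
  Adj u v := u ≠ v ∧ D.Special u v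
  symm := by
    constructor
    rintro u v ⟨hne, h1, h2, h3⟩
    exact ⟨hne.symm, h2, h1, by linarith⟩
  loopless := by constructor; rintro u ⟨hne, -⟩; exact hne rfl

/-- The weight of a walk of `F`, each edge being traversed as the special arc pointing
in the direction of the traversal. -/
def fWeight {s t : V} (p : D.F.Walk s t) : ℝ :=
  (p.darts.map fun d => D.c d.toProd.1 d.toProd.2).sum

/-- The improved digraph with the original (special) arcs in `Rem` removed. -/
def arcsMinus (Rem : V → V → Prop) (u v : V) (b : Bool) : Prop :=
  D.ImpArc u v b ∧ ¬ (b = false ∧ Rem u v)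

end WDigraph

/-- The special arcs of the negative tree containing `t₀` (to be removed from `D`). -/
def remT (D : WDigraph V) (t₀ : V) : V → V → Prop :=
  fun x y => D.F.Adj x y ∧ D.F.Reachable t₀ x

/-! ### Auxiliary lemmas -/

section Aux

set_option linter.unusedSectionVars false

lemma wSum_append' (w : V → V → Bool → ℝ) (l1 l2 : List (Step V)) :
    wSum w (l1 ++ l2) = wSum w l1 + wSum w l2 := by
  simp [wSum]

lemma heads_append' (l1 l2 : List (Step V)) :
    heads (l1 ++ l2) = heads l1 ++ heads l2 := by simp [heads]

lemma isWalk_append' {AS : V → V → Bool → Prop} {s m t : V} {l1 l2 : List (Step V)}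
    (h1 : IsWalk AS s m l1) (h2 : IsWalk AS m t l2) : IsWalk AS s t (l1 ++ l2) := by
  induction l1 generalizing s with
  | nil => cases h1; simpa using h2
  | cons a tl ih =>
      obtain ⟨x, y, b⟩ := a
      obtain ⟨rfl, ha, hw⟩ := h1
      exact ⟨rfl, ha, ih hw⟩

lemma walk_mem' {AS : V → V → Bool → Prop} {s t : V} {l : List (Step V)}
    (h : IsWalk AS s t l) {a : Step V} (ha : a ∈ l) : AS a.1 a.2.1 a.2.2 := by
  induction l generalizing s with
  | nil => cases ha
  | cons b tl ih =>
      obtain ⟨x, y, bb⟩ := b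
      obtain ⟨rfl, hb, hw⟩ := h
      rcases List.mem_cons.1 ha with rfl | ha
      · exact hb
      · exact ih hw ha

lemma walk_mono' {AS AS' : V → V → Bool → Prop} (hAS : ∀ u v b, AS u v b → AS' u v b)
    {s t : V} {l : List (Step V)} (h : IsWalk AS s t l) : IsWalk AS' s t l := by
  induction l generalizing s with
  | nil => exact h
  | cons b tl ih =>
      obtain ⟨x, y, bb⟩ := b
      obtain ⟨rfl, hb, hw⟩ := h
      exact ⟨rfl, hAS _ _ _ hb, ih hw⟩

lemma path_no_rev' {AS : V → V → Bool → Prop} {s t : V} {l : List (Step V)}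
    (h : IsWalk AS s t l) (hnd : (s :: heads l).Nodup)
    {x y : V} {b b' : Bool} (h1 : (x, y, b) ∈ l) (h2 : (y, x, b') ∈ l) : False := by
  induction l generalizing s with
  | nil => cases h1
  | cons a tl ih =>
      obtain ⟨u0, v0, b0⟩ := a
      obtain ⟨rfl, ha, hw⟩ := h
      have hnd' : (u0 :: heads ((u0, v0, b0) :: tl)).Nodup := hnd
      rw [show heads ((u0, v0, b0) :: tl) = v0 :: heads tl from rfl] at hnd'
      have hknot : u0 ∉ v0 :: heads tl := (List.nodup_cons.1 hnd').1
      have hndtl : (v0 :: heads tl).Nodup := (List.nodup_cons.1 hnd').2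
      rcases List.mem_cons.1 h1 with he1 | h1'
      · rcases List.mem_cons.1 h2 with he2 | h2'
        · have hy1 : y = v0 := congrArg (fun p => p.2.1) he1
          have hy2 : y = u0 := congrArg Prod.fst he2
          exact hknot (by rw [← hy2, hy1]; exact List.mem_cons_self)
        · have hx : x = u0 := congrArg Prod.fst he1
          have : x ∈ heads tl := List.mem_map.2 ⟨(y, x, b'), h2', rfl⟩
          exact hknot (hx ▸ List.mem_cons_of_mem _ this)
      · rcases List.mem_cons.1 h2 with he2 | h2'
        · have hy : y = u0 := congrArg Prod.fst he2
          have : y ∈ heads tl := List.mem_map.2 ⟨(x, y, b), h1', rfl⟩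
          exact hknot (hy ▸ List.mem_cons_of_mem _ this)
        · exact ih hw hndtl h1' h2'

lemma walk_split' {AS : V → V → Bool → Prop} {s t w : V} {l : List (Step V)}
    (h : IsWalk AS s t l) (hw : w ∈ heads l) :
    ∃ l1 l2, l = l1 ++ l2 ∧ l1 ≠ [] ∧ IsWalk AS s w l1 ∧ IsWalk AS w t l2 ∧
      (heads l1).count w = 1 := by
  induction l generalizing s with
  | nil => cases hw
  | cons a tl ih =>
      obtain ⟨u0, v0, b0⟩ := a
      obtain ⟨rfl, ha, hwk⟩ := h
      by_cases hv : v0 = w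
      · subst hv
        exact ⟨[(u0, v0, b0)], tl, rfl, by simp, ⟨rfl, ha, rfl⟩, hwk, by simp [heads]⟩
      · have hw' : w ∈ heads tl := by
          rcases List.mem_cons.1 hw with h | h
          · exact absurd h.symm hv
          · exact h
        obtain ⟨r1, r2, hsplit, hne, hw1, hw2, hcnt⟩ := ih hwk hw'
        refine ⟨(u0, v0, b0) :: r1, r2, by rw [hsplit, List.cons_append],
          by simp, ⟨rfl, ha, hw1⟩, hw2, ?_⟩
        simp only [heads, List.map_cons, List.count_cons]
        simpa [heads, hv] using hcnt

lemma exists_neg_cycle' {AS : V → V → Bool → Prop} {w : V → V → Bool → ℝ} :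
    ∀ (n : ℕ) (l : List (Step V)) (s : V), l.length ≤ n → IsWalk AS s s l → l ≠ [] →
      wSum w l < 0 →
      ∃ s' l', IsCycle AS s' l' ∧ wSum w l' < 0 ∧ ∀ a ∈ l', a ∈ l := by
  intro n
  induction n with
  | zero =>
      intro l s hl hw hne _
      cases l with
      | nil => exact absurd rfl hne
      | cons a tl => simp at hl
  | succ n ih =>
      intro l s hl hw hne hneg
      by_cases hnd : (heads l).Nodup
      · exact ⟨s, l, ⟨hw, hne, hnd⟩, hneg, fun a ha => ha⟩
      · obtain ⟨x, hx⟩ := List.exists_duplicate_iff_not_nodup.2 hnd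
        have hx2 : 2 ≤ (heads l).count x := List.duplicate_iff_two_le_count.1 hx
        have hxmem : x ∈ heads l := List.count_pos_iff.1 (by omega)
        obtain ⟨l1, l2, rfl, hne1, hwk1, hwk2, hcnt1⟩ := walk_split' hw hxmem
        have hxmem2 : x ∈ heads l2 := by
          rw [heads_append', List.count_append, hcnt1] at hx2
          exact List.count_pos_iff.1 (by omega)
        obtain ⟨m1, m2, rfl, hnem1, hwm1, hwm2, _⟩ := walk_split' hwk2 hxmem2
        have hlen1 : 1 ≤ l1.length := List.length_pos_iff.2 hne1
        have hlenm1 : 1 ≤ m1.length := List.length_pos_iff.2 hnem1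
        have hlen : l1.length + (m1.length + m2.length) ≤ n + 1 := by
          simpa using hl
        have hsum : wSum w (l1 ++ (m1 ++ m2)) = wSum w m1 + wSum w (l1 ++ m2) := by
          rw [wSum_append', wSum_append', wSum_append']; ring
        by_cases hm1 : wSum w m1 < 0
        · obtain ⟨s', l', hc, hn, hmem⟩ := ih m1 x (by omega) hwm1 hnem1 hm1
          exact ⟨s', l', hc, hn, fun a ha => by
            have := hmem a ha; simp [this]⟩
        · have hneg2 : wSum w (l1 ++ m2) < 0 := by
            rw [hsum] at hneg; push_neg at hm1; linarith
          have hwk' : IsWalk AS s s (l1 ++ m2) := isWalk_append' hwk1 hwm2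
          obtain ⟨s', l', hc, hn, hmem⟩ := ih (l1 ++ m2) s
            (by simp; omega) hwk' (by
              intro hcon
              rw [hcon] at hneg2
              simp [wSum] at hneg2) hneg2
          exact ⟨s', l', hc, hn, fun a ha => by
            have := hmem a ha; simp at this ⊢; tauto⟩

/-- Turn a walk in `F` into a list of steps of the improved digraph. -/
def qsteps (D : WDigraph V) : ∀ {s t : V}, D.F.Walk s t → List (Step V) :=
  fun p => p.darts.map fun d => (d.toProd.1, d.toProd.2, false)

lemma qsteps_walk (D : WDigraph V) {s t : V} (p : D.F.Walk s t) :
    IsWalk D.ImpArc s t (qsteps D p) := by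
  induction p with
  | nil => rfl
  | cons h p ih =>
      exact ⟨rfl, by simpa [WDigraph.ImpArc] using h.2.1, ih⟩

lemma heads_qsteps (D : WDigraph V) {s t : V} (p : D.F.Walk s t) :
    heads (qsteps D p) = p.support.tail := by
  induction p with
  | nil => rfl
  | cons h p ih =>
      rw [SimpleGraph.Walk.support_cons, List.tail_cons,
        SimpleGraph.Walk.support_eq_cons p, ← ih]
      rfl

lemma wSum_qsteps (D : WDigraph V) {s t : V} (p : D.F.Walk s t) :
    wSum D.impW (qsteps D p) = D.fWeight p := by
  unfold wSum qsteps WDigraph.fWeight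
  rw [List.map_map]
  congr 1

lemma mem_qsteps (D : WDigraph V) {s t : V} (p : D.F.Walk s t) {x y : V} {b : Bool}
    (h : (x, y, b) ∈ qsteps D p) :
    b = false ∧ D.F.Adj x y ∧ x ∈ p.support ∧ y ∈ p.support := by
  obtain ⟨d, hd, he⟩ := List.mem_map.1 h
  have hx : d.toProd.1 = x := congrArg Prod.fst he
  have hy : d.toProd.2 = y := congrArg (fun a => a.2.1) he
  have hb : b = false := (congrArg (fun a => a.2.2) he).symm
  refine ⟨hb, ?_, ?_, ?_⟩
  · rw [← hx, ← hy]; exact d.adj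
  · rw [← hx]; exact SimpleGraph.Walk.dart_fst_mem_support_of_mem_darts _ hd
  · rw [← hy]; exact SimpleGraph.Walk.dart_snd_mem_support_of_mem_darts _ hd

end Aux

/-- Let `T` be the negative tree of the forest `F` containing `t₀`, and let
`u, v ∈ V(T)`.  If `P` is a directed path from `u` to `v` in `D' = D − A(T)` with total
weight `c(P) < −d^T(v,u)`, then `c` is not nearly conservative on the improved digraph `D`. -/
theorem statement_5 {V : Type} [Fintype V] [DecidableEq V] (D : WDigraph V)
    (hloop : ∀ v, ¬ D.Adj v v) (hforest : D.F.IsAcyclic)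
    (t₀ : V) (hT : ∃ y, D.F.Adj t₀ y)
    (u v : V) (hu : D.F.Reachable t₀ u) (hv : D.F.Reachable t₀ v)
    (P : List (Step V)) (hP : IsPath (D.arcsMinus (remT D t₀)) u v P)
    (q : D.F.Walk v u) (hq : q.IsPath)
    (hlt : wSum D.impW P < -(D.fWeight q)) :
    ¬ NearlyCons D.ImpArc D.impW := by
  intro hNC
  set W : List (Step V) := P ++ qsteps D q with hWdef
  have hPwalk : IsWalk D.ImpArc u v P := walk_mono' (fun a b bb h => h.1) hP.1
  have hWwalk : IsWalk D.ImpArc u u W := isWalk_append' hPwalk (qsteps_walk D q)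
  have hWsum : wSum D.impW W < 0 := by
    rw [hWdef, wSum_append', wSum_qsteps]; linarith
  have hWne : W ≠ [] := by
    intro h; rw [h] at hWsum; simp [wSum] at hWsum
  -- reachability of support vertices of q
  have hreach : ∀ x ∈ q.support, D.F.Reachable t₀ x := by
    intro x hx
    exact hv.trans ⟨q.takeUntil x hx⟩
  -- the Good property
  have hGood : ∀ x y b b', (x, y, b) ∈ W → (y, x, b') ∈ W →
      0 ≤ D.impW x y b + D.impW y x b' := by
    intro x y b b' h1 h2
    rcases List.mem_append.1 h1 with h1P | h1q <;>
      rcases List.mem_append.1 h2 with h2P | h2q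
    · exact absurd (path_no_rev' hP.1 hP.2 h1P h2P) (fun h => h)
    · -- (x,y,b) ∈ P, (y,x,b') ∈ qsteps
      obtain ⟨hb', hadj, hys, hxs⟩ := mem_qsteps D q h2q
      have harc := walk_mem' hP.1 h1P
      cases b with
      | false =>
          exfalso
          exact harc.2 ⟨rfl, hadj.symm, hreach x hxs⟩
      | true =>
          have hb'' : b' = false := hb'
          subst hb''
          simp [WDigraph.impW]
    · -- (x,y,b) ∈ qsteps, (y,x,b') ∈ P
      obtain ⟨hb, hadj, hxs, hys⟩ := mem_qsteps D q h1q
      have harc := walk_mem' hP.1 h2P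
      cases b' with
      | false =>
          exfalso
          exact harc.2 ⟨rfl, hadj.symm, hreach y hys⟩
      | true =>
          subst hb
          simp [WDigraph.impW]
    · -- both in qsteps
      exfalso
      have hndq : (v :: heads (qsteps D q)).Nodup := by
        rw [heads_qsteps]
        rw [show v :: q.support.tail = q.support from
          (SimpleGraph.Walk.support_eq_cons q).symm]
        exact hq.support_nodup
      exact path_no_rev' (qsteps_walk D q) hndq h1q h2q
  obtain ⟨s', l', hcyc, hcneg, hmem⟩ :=
    exists_neg_cycle' W.length W u le_rfl hWwalk hWne hWsum
  have hlen2 : l'.length = 2 := hNC s' l' hcyc hcneg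
  obtain ⟨a1, a2, rfl⟩ := List.length_eq_two.1 hlen2
  obtain ⟨x1, y1, b1⟩ := a1
  obtain ⟨x2, y2, b2⟩ := a2
  obtain ⟨h1, -, h2, -, h3⟩ := hcyc.1
  have h3' : y2 = s' := h3
  have e2 : (y1, x1, b2) = (x2, y2, b2) := by rw [h2, h3', h1]
  have hg := hGood x1 y1 b1 b2 (hmem _ (by simp))
    (by rw [e2]; exact hmem _ (by simp))
  have e3 : y2 = x1 := h3'.trans h1.symm
  have hws : wSum D.impW [(x1, y1, b1), (x2, y2, b2)] =
      D.impW x1 y1 b1 + D.impW x2 y2 b2 := by simp [wSum]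
  rw [hws, h2, e3] at hcneg
  linarith


end NearlyConservativePaper
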